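/- arXiv:1509.08045 — 2 statements merged into one kernel-verified Lean document; each statement's English description precedes it below -/
import Mathlib

section
/- Let ξ_m > 0, λ > 0, μ ∈ (0, ξ_m], and define F(u) = (λ/ξ_m)·u·(sqrt(ξ_m² + u²) − sqrt(μ² + u²) + μ·log((μ + sqrt(μ² + u²))/u)) for u > 0. Then for any initial value u₀ > 0, the sequence u_{n+1} = F(u_n) is monotone (nondecreasing if u₀ ≤ F(u₀), nonincreasing if u₀ ≥ F(u₀)) and converges to the unique positive fixed point of F, which is the unique positive solution of the zero-temperature gap equation. -/
/-!
Write `g` for the right-hand side of the gap equation, so that `F u = (λ/ξm) u g(u)`. On `u > 0`,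
`g` is strictly decreasing (from `+∞` to `0`), while `u g(u)` is nondecreasing: its derivative is
bounded below using `arsinh x ≥ x / √(1 + x²)`. Hence `F` is monotone on `(0, ∞)` and has exactly
one positive fixed point `p`, characterised by `g p = ξm/λ`, with `u ≤ F u ↔ u ≤ p`. An orbit of a
monotone map is monotone and stays on the side of `p` where it starts, so it converges, and by
continuity its limit is a fixed point, i.e. `p`.
-/

open Filter Topology Set

section Recurrence

variable {α : Type*} {S : Set α} {f : α → α} {u v : ℕ → α}

theorem mem_of_recurrence (hS : MapsTo f S S) (hrec : ∀ n, u (n + 1) = f (u n)) (hu0 : u 0 ∈ S) :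
    ∀ n, u n ∈ S
  | 0 => hu0
  | n + 1 => hrec n ▸ hS (mem_of_recurrence hS hrec hu0 n)

variable [Preorder α]

theorem le_of_recurrence (hf : MonotoneOn f S) (hS : MapsTo f S S)
    (hu : ∀ n, u (n + 1) = f (u n)) (hv : ∀ n, v (n + 1) = f (v n))
    (hu0 : u 0 ∈ S) (hv0 : v 0 ∈ S) (h0 : u 0 ≤ v 0) : ∀ n, u n ≤ v n
  | 0 => h0
  | n + 1 => by
    rw [hu, hv]
    exact hf (mem_of_recurrence hS hu hu0 n) (mem_of_recurrence hS hv hv0 n)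
      (le_of_recurrence hf hS hu hv hu0 hv0 h0 n)

theorem monotone_of_recurrence (hf : MonotoneOn f S) (hS : MapsTo f S S)
    (hrec : ∀ n, u (n + 1) = f (u n)) (hu0 : u 0 ∈ S) (h : u 0 ≤ f (u 0)) : Monotone u :=
  monotone_nat_of_le_succ <| le_of_recurrence hf hS hrec (fun n => hrec (n + 1)) hu0
    (hrec 0 ▸ hS hu0) (hrec 0 ▸ h)

theorem antitone_of_recurrence (hf : MonotoneOn f S) (hS : MapsTo f S S)
    (hrec : ∀ n, u (n + 1) = f (u n)) (hu0 : u 0 ∈ S) (h : f (u 0) ≤ u 0) : Antitone u :=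
  antitone_nat_of_succ_le <| le_of_recurrence hf hS (fun n => hrec (n + 1)) hrec
    (hrec 0 ▸ hS hu0) hu0 (hrec 0 ▸ h)

end Recurrence

section Limit

variable {α : Type*} {S : Set α} {f : α → α} {u : ℕ → α}

theorem map_eq_of_tendsto_recurrence [TopologicalSpace α] [T2Space α] {L : α}
    (hrec : ∀ n, u (n + 1) = f (u n)) (hu : Tendsto u atTop (𝓝 L)) (hf : ContinuousAt f L) :
    f L = L := by
  have hshift := (tendsto_add_atTop_iff_nat 1).2 hu
  simp only [hrec] at hshift
  exact tendsto_nhds_unique (hf.tendsto.comp hu) hshift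

theorem tendsto_of_recurrence [ConditionallyCompleteLinearOrder α] [TopologicalSpace α]
    [OrderTopology α] [S.OrdConnected] {p : α} (hf : MonotoneOn f S) (hS : MapsTo f S S)
    (hcont : ∀ x ∈ S, ContinuousAt f x) (hp : p ∈ S) (hfp : f p = p)
    (hle : ∀ x ∈ S, x ≤ f x → x ≤ p) (hge : ∀ x ∈ S, f x ≤ x → p ≤ x)
    (hrec : ∀ n, u (n + 1) = f (u n)) (hu0 : u 0 ∈ S) : Tendsto u atTop (𝓝 p) := by
  have hconst : ∀ n : ℕ, (fun _ => p) (n + 1) = f ((fun _ => p) n) := fun _ => hfp.symm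
  obtain ⟨L, hLS, hL⟩ : ∃ L ∈ S, Tendsto u atTop (𝓝 L) := by
    rcases le_total (u 0) (f (u 0)) with h | h
    · have hbound := le_of_recurrence (v := fun _ => p) hf hS hrec hconst hu0 hp (hle _ hu0 h)
      have hbdd : BddAbove (range u) := ⟨p, forall_mem_range.2 hbound⟩
      exact ⟨⨆ n, u n, S.Icc_subset hu0 hp ⟨le_ciSup hbdd 0, ciSup_le hbound⟩,
        tendsto_atTop_ciSup (monotone_of_recurrence hf hS hrec hu0 h) hbdd⟩
    · have hbound := le_of_recurrence (u := fun _ => p) hf hS hconst hrec hp hu0 (hge _ hu0 h)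
      have hbdd : BddBelow (range u) := ⟨p, forall_mem_range.2 hbound⟩
      exact ⟨⨅ n, u n, S.Icc_subset hp hu0 ⟨le_ciInf hbound, ciInf_le hbdd 0⟩,
        tendsto_atTop_ciInf (antitone_of_recurrence hf hS hrec hu0 h) hbdd⟩
  have hfL := map_eq_of_tendsto_recurrence hrec hL (hcont L hLS)
  rwa [le_antisymm (hle L hLS hfL.ge) (hge L hLS hfL.le)] at hL

end Limit

namespace Real

theorem sinh_le_mul_cosh {y : ℝ} (hy : 0 ≤ y) : sinh y ≤ y * cosh y := by
  have hmono : MonotoneOn (fun y => y * cosh y - sinh y) (Ici 0) := by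
    refine monotoneOn_of_hasDerivWithinAt_nonneg (f' := fun y => y * sinh y) (convex_Ici 0)
      (by fun_prop) (fun x _ => ?_) (fun x hx => ?_)
    · have h : HasDerivAt (fun y => y * cosh y - sinh y) (1 * cosh x + x * sinh x - cosh x) x :=
        ((hasDerivAt_id' x).mul (hasDerivAt_cosh x)).sub (hasDerivAt_sinh x)
      exact (h.congr_deriv (by ring)).hasDerivWithinAt
    · rw [interior_Ici] at hx
      exact mul_nonneg hx.le (sinh_nonneg_iff.2 hx.le)
  simpa using hmono self_mem_Ici hy hy

theorem div_sqrt_one_add_sq_le_arsinh {x : ℝ} (hx : 0 ≤ x) : x / √(1 + x ^ 2) ≤ arsinh x := by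
  have h := sinh_le_mul_cosh (arsinh_nonneg_iff.2 hx)
  rw [sinh_arsinh, cosh_arsinh] at h
  rwa [div_le_iff₀ (by positivity)]

theorem arsinh_le_self {x : ℝ} (hx : 0 ≤ x) : arsinh x ≤ x := by
  rw [← sinh_le_sinh, sinh_arsinh]
  exact self_le_sinh_iff.2 hx

theorem sqrt_one_add_div_sq {μ u : ℝ} (hu : 0 < u) : √(1 + (μ / u) ^ 2) = √(μ ^ 2 + u ^ 2) / u := by
  rw [← sqrt_sq hu.le, ← sqrt_div' _ (by positivity), sqrt_sq hu.le]
  congr 1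
  field_simp
  ring

theorem log_add_sqrt_div_eq_arsinh (μ : ℝ) {u : ℝ} (hu : 0 < u) :
    log ((μ + √(μ ^ 2 + u ^ 2)) / u) = arsinh (μ / u) := by
  rw [arsinh, sqrt_one_add_div_sq hu, add_div]

end Real

section GapRHS

open Real

noncomputable def gapRHS (ξm μ u : ℝ) : ℝ :=
  √(ξm ^ 2 + u ^ 2) - √(μ ^ 2 + u ^ 2) + μ * log ((μ + √(μ ^ 2 + u ^ 2)) / u)

theorem hasDerivAt_sqrt_sq_add_sq (c : ℝ) {u : ℝ} (hu : u ≠ 0) :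
    HasDerivAt (fun v => √(c ^ 2 + v ^ 2)) (u / √(c ^ 2 + u ^ 2)) u := by
  have h := ((hasDerivAt_pow 2 u).const_add (c ^ 2)).sqrt (by positivity)
  exact h.congr_deriv (by ring)

variable {ξm μ : ℝ}

theorem hasDerivAt_gapRHS (ξm : ℝ) (hμ : 0 < μ) {u : ℝ} (hu : 0 < u) :
    HasDerivAt (gapRHS ξm μ) (u / √(ξm ^ 2 + u ^ 2) - √(μ ^ 2 + u ^ 2) / u) u := by
  have hlog : HasDerivAt (fun v => log (μ + √(μ ^ 2 + v ^ 2)) - log v)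
      (u / √(μ ^ 2 + u ^ 2) / (μ + √(μ ^ 2 + u ^ 2)) - u⁻¹) u :=
    ((hasDerivAt_sqrt_sq_add_sq μ hu.ne').const_add μ |>.log (by positivity)).sub
      (hasDerivAt_log hu.ne')
  have h := ((hasDerivAt_sqrt_sq_add_sq ξm hu.ne').sub (hasDerivAt_sqrt_sq_add_sq μ hu.ne')).add
    (hlog.const_mul μ)
  refine (h.congr_deriv ?_).congr_of_eventuallyEq ?_
  · have hb2 : √(μ ^ 2 + u ^ 2) ^ 2 = μ ^ 2 + u ^ 2 := sq_sqrt (by positivity)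
    field_simp
    linear_combination √(μ ^ 2 + u ^ 2) * √(ξm ^ 2 + u ^ 2) * hb2
  · filter_upwards [Ioi_mem_nhds hu] with v hv
    rw [gapRHS, log_div (by positivity) (ne_of_gt hv)]
    rfl

theorem continuousAt_gapRHS (ξm : ℝ) (hμ : 0 < μ) {u : ℝ} (hu : 0 < u) :
    ContinuousAt (gapRHS ξm μ) u :=
  (hasDerivAt_gapRHS ξm hμ hu).continuousAt

theorem gapRHS_strictAntiOn (ξm : ℝ) (hμ : 0 < μ) : StrictAntiOn (gapRHS ξm μ) (Ioi 0) := by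
  refine strictAntiOn_of_hasDerivWithinAt_neg
    (f' := fun u => u / √(ξm ^ 2 + u ^ 2) - √(μ ^ 2 + u ^ 2) / u) (convex_Ioi 0)
    (fun u hu => (continuousAt_gapRHS ξm hμ hu).continuousWithinAt)
    (fun u hu => ?_) (fun u hu => ?_)
  all_goals rw [interior_Ioi] at hu
  · exact (hasDerivAt_gapRHS ξm hμ hu).hasDerivWithinAt
  · have hua : u / √(ξm ^ 2 + u ^ 2) ≤ 1 :=
      div_le_one_of_le₀ (le_sqrt_of_sq_le (by nlinarith)) (sqrt_nonneg _)
    have hub : 1 < √(μ ^ 2 + u ^ 2) / u :=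
      (one_lt_div hu).2 ((lt_sqrt hu.le).2 (by nlinarith))
    linarith

theorem gapRHS_pos (hμ : 0 < μ) (hμξ : μ ≤ ξm) {u : ℝ} (hu : 0 < u) : 0 < gapRHS ξm μ u := by
  have hab : √(μ ^ 2 + u ^ 2) ≤ √(ξm ^ 2 + u ^ 2) := sqrt_le_sqrt (by nlinarith)
  have hlog : 0 < log ((μ + √(μ ^ 2 + u ^ 2)) / u) := by
    rw [log_add_sqrt_div_eq_arsinh μ hu]
    exact arsinh_pos_iff.2 (div_pos hμ hu)
  unfold gapRHS
  nlinarith [mul_pos hμ hlog]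

theorem gapRHS_le (hμ : 0 < μ) (hμξ : μ ≤ ξm) {u : ℝ} (hu : 0 < u) :
    gapRHS ξm μ u ≤ ξm ^ 2 / u := by
  have ha2 : √(ξm ^ 2 + u ^ 2) ^ 2 = ξm ^ 2 + u ^ 2 := sq_sqrt (by positivity)
  have hb2 : √(μ ^ 2 + u ^ 2) ^ 2 = μ ^ 2 + u ^ 2 := sq_sqrt (by positivity)
  have hab : √(μ ^ 2 + u ^ 2) ≤ √(ξm ^ 2 + u ^ 2) := sqrt_le_sqrt (by nlinarith)
  have hub : u ≤ √(μ ^ 2 + u ^ 2) := le_sqrt_of_sq_le (by nlinarith)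
  have hdiff : √(ξm ^ 2 + u ^ 2) - √(μ ^ 2 + u ^ 2) ≤ (ξm ^ 2 - μ ^ 2) / u := by
    rw [le_div_iff₀ hu]
    nlinarith
  have hlog : μ * log ((μ + √(μ ^ 2 + u ^ 2)) / u) ≤ μ * (μ / u) := by
    rw [log_add_sqrt_div_eq_arsinh μ hu]
    exact mul_le_mul_of_nonneg_left (arsinh_le_self (by positivity)) hμ.le
  calc gapRHS ξm μ u ≤ (ξm ^ 2 - μ ^ 2) / u + μ * (μ / u) := add_le_add hdiff hlog
    _ = ξm ^ 2 / u := by ring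

theorem gapRHS_add_mul_deriv_nonneg (hμ : 0 < μ) (hμξ : μ ≤ ξm) {u : ℝ} (hu : 0 < u) :
    0 ≤ gapRHS ξm μ u + u * (u / √(ξm ^ 2 + u ^ 2) - √(μ ^ 2 + u ^ 2) / u) := by
  set a := √(ξm ^ 2 + u ^ 2)
  set b := √(μ ^ 2 + u ^ 2) with hb_def
  have ha : 0 < a := by positivity
  have hb : 0 < b := by positivity
  have hb2 : b ^ 2 = μ ^ 2 + u ^ 2 := sq_sqrt (by positivity)
  have hab : b ≤ a := sqrt_le_sqrt (by nlinarith)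
  have hub : u ≤ b := le_sqrt_of_sq_le (by nlinarith)
  have hlog : μ / b ≤ log ((μ + b) / u) := by
    have h := div_sqrt_one_add_sq_le_arsinh (div_pos hμ hu).le
    rwa [sqrt_one_add_div_sq hu, div_div_div_cancel_right₀ hu.ne', ← hb_def,
      ← log_add_sqrt_div_eq_arsinh μ hu] at h
  have hg : a - b + μ * (μ / b) ≤ gapRHS ξm μ u := by
    unfold gapRHS
    gcongr
  -- with `μ² = b² - u²` the lower bound collapses to a product of two nonnegative factors
  have hident : a - b + μ * (μ / b) + u * (u / a - b / u) = (a - b) * (a * b - u ^ 2) / (a * b) := by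
    field_simp
    linear_combination (-a) * hb2
  have hprod : 0 ≤ (a - b) * (a * b - u ^ 2) / (a * b) :=
    div_nonneg (mul_nonneg (by linarith) (by nlinarith)) (by positivity)
  linarith

theorem mul_gapRHS_monotoneOn (hμ : 0 < μ) (hμξ : μ ≤ ξm) :
    MonotoneOn (fun u => u * gapRHS ξm μ u) (Ioi 0) := by
  refine monotoneOn_of_hasDerivWithinAt_nonneg
    (f' := fun u => gapRHS ξm μ u + u * (u / √(ξm ^ 2 + u ^ 2) - √(μ ^ 2 + u ^ 2) / u))
    (convex_Ioi 0) (fun u hu => ?_) (fun u hu => ?_) (fun u hu => ?_)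
  · exact (continuousAt_id.mul (continuousAt_gapRHS ξm hμ hu)).continuousWithinAt
  all_goals rw [interior_Ioi] at hu
  · exact (((hasDerivAt_id' u).mul (hasDerivAt_gapRHS ξm hμ hu)).congr_deriv
      (by rw [one_mul])).hasDerivWithinAt
  · exact gapRHS_add_mul_deriv_nonneg hμ hμξ hu

theorem exists_gapRHS_eq (hμ : 0 < μ) (hμξ : μ ≤ ξm) {y : ℝ} (hy : 0 < y) :
    ∃ u, 0 < u ∧ gapRHS ξm μ u = y := by
  -- `c` is where the logarithmic term alone reaches `y`; `d` is where the bound `ξm² / u` does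
  set c := μ * exp (-(y / μ))
  set d := max (ξm ^ 2 / y) c
  have hc : 0 < c := by positivity
  have hcd : c ≤ d := le_max_right _ _
  have hgc : y ≤ gapRHS ξm μ c := by
    have hab : √(μ ^ 2 + c ^ 2) ≤ √(ξm ^ 2 + c ^ 2) := sqrt_le_sqrt (by nlinarith)
    have hlog : y / μ ≤ log ((μ + √(μ ^ 2 + c ^ 2)) / c) := by
      have hμc : μ / c = exp (y / μ) := by
        simp only [c, exp_neg]
        field_simp
      rw [← log_exp (y / μ), ← hμc]
      exact log_le_log (by positivity)
        (div_le_div_of_nonneg_right (le_add_of_nonneg_right (sqrt_nonneg _)) hc.le)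
    have h := mul_le_mul_of_nonneg_left hlog hμ.le
    rw [mul_div_cancel₀ _ hμ.ne'] at h
    unfold gapRHS
    linarith
  have hgd : gapRHS ξm μ d ≤ y :=
    calc gapRHS ξm μ d ≤ ξm ^ 2 / d := gapRHS_le hμ hμξ (hc.trans_le hcd)
      _ ≤ ξm ^ 2 / (ξm ^ 2 / y) := div_le_div_of_nonneg_left (sq_nonneg _)
        (by have := hμ.trans_le hμξ; positivity) (le_max_left _ _)
      _ = y := by field_simp [(hμ.trans_le hμξ).ne']
  have hcont : ContinuousOn (gapRHS ξm μ) (Icc c d) := fun x hx =>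
    (continuousAt_gapRHS ξm hμ (hc.trans_le hx.1)).continuousWithinAt
  obtain ⟨u, hu, hgu⟩ := intermediate_value_Icc' hcd hcont ⟨hgd, hgc⟩
  exact ⟨u, hc.trans_le hu.1, hgu⟩

end GapRHS

theorem zero_temp_iteration_converges (ξm lam μ : ℝ) (hξ : 0 < ξm) (hlam : 0 < lam)
    (hμ0 : 0 < μ) (hμ : μ ≤ ξm)
    (F : ℝ → ℝ)
    (hF : ∀ u : ℝ, F u = lam / ξm * u *
      (Real.sqrt (ξm ^ 2 + u ^ 2) - Real.sqrt (μ ^ 2 + u ^ 2)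
        + μ * Real.log ((μ + Real.sqrt (μ ^ 2 + u ^ 2)) / u)))
    (u : ℕ → ℝ) (hu0 : 0 < u 0) (hrec : ∀ n, u (n + 1) = F (u n)) :
    (u 0 ≤ F (u 0) → Monotone u) ∧
    (F (u 0) ≤ u 0 → Antitone u) ∧
    ∃ L : ℝ, 0 < L ∧ Tendsto u atTop (𝓝 L) ∧ F L = L ∧
      (ξm / lam = Real.sqrt (ξm ^ 2 + L ^ 2) - Real.sqrt (μ ^ 2 + L ^ 2)
        + μ * Real.log ((μ + Real.sqrt (μ ^ 2 + L ^ 2)) / L)) ∧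
      (∀ Δ : ℝ, 0 < Δ →
        ξm / lam = Real.sqrt (ξm ^ 2 + Δ ^ 2) - Real.sqrt (μ ^ 2 + Δ ^ 2)
          + μ * Real.log ((μ + Real.sqrt (μ ^ 2 + Δ ^ 2)) / Δ) → Δ = L) := by
  have hFg : ∀ v, F v = v * (lam / ξm * gapRHS ξm μ v) := fun v => by rw [hF, gapRHS]; ring
  have hκ : 0 < lam / ξm := div_pos hlam hξ
  have hanti := gapRHS_strictAntiOn ξm hμ0
  obtain ⟨p, hp, hgp⟩ := exists_gapRHS_eq hμ0 hμ (div_pos hξ hlam)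
  have hle : ∀ v ∈ Ioi (0 : ℝ), v ≤ F v ↔ v ≤ p := fun v hv => by
    rw [hFg, le_mul_iff_one_le_right hv, ← div_le_iff₀' hκ, one_div_div, ← hgp,
      hanti.le_iff_ge hp hv]
  have hge : ∀ v ∈ Ioi (0 : ℝ), F v ≤ v ↔ p ≤ v := fun v hv => by
    rw [hFg, mul_le_iff_le_one_right hv, ← le_div_iff₀' hκ, one_div_div, ← hgp,
      hanti.le_iff_ge hv hp]
  have hFp : F p = p := le_antisymm ((hge p hp).2 le_rfl) ((hle p hp).2 le_rfl)
  have hmono : MonotoneOn F (Ioi 0) := fun x hx y hy hxy => by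
    simp only [hFg, ← mul_assoc, mul_right_comm _ (lam / ξm)]
    exact mul_le_mul_of_nonneg_right (mul_gapRHS_monotoneOn hμ0 hμ hx hy hxy) hκ.le
  have hmaps : MapsTo F (Ioi 0) (Ioi 0) := fun v hv => by
    rw [mem_Ioi, hFg]
    exact mul_pos hv (mul_pos hκ (gapRHS_pos hμ0 hμ hv))
  have hcont : ∀ v ∈ Ioi (0 : ℝ), ContinuousAt F v := fun v hv => by
    rw [funext hFg]
    exact continuousAt_id.mul (continuousAt_const.mul (continuousAt_gapRHS ξm hμ0 hv))
  refine ⟨monotone_of_recurrence hmono hmaps hrec hu0, antitone_of_recurrence hmono hmaps hrec hu0,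
    p, hp, tendsto_of_recurrence hmono hmaps hcont hp hFp (fun v hv => (hle v hv).1)
      (fun v hv => (hge v hv).1) hrec hu0, hFp, hgp.symm, fun Δ hΔ hgΔ => ?_⟩
  exact hanti.injOn hΔ hp (hgΔ.symm.trans hgp.symm)
end

section
/- For any ξ_m > 0, λ > 0, and μ ∈ (0, ξ_m), the critical-temperature equation ξ_m/λ = 2T_c·log(cosh(ξ_m/(2T_c))/cosh(μ/(2T_c))) + μ·∫₀^μ tanh(ξ/(2T_c))/ξ dξ has exactly one solution T_c > 0, and T_c is strictly increasing as a function of μ (for fixed ξ_m, λ) and strictly increasing as a function of λ (for fixed ξ_m, μ). -/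
/-!
Put `s = 1 / (2 * Tc)` and `Ψ x = ∫₀ˣ tanh t / t dt`. Since `log cosh` is a primitive of `tanh`,
the right-hand side of the equation becomes `G s = ∫_μ^ξm tanh (s t) dt + μ Ψ (s μ)`, which is
strictly increasing in `s` because `tanh` is. It is continuous, at most `s (ξm² / 2 + μ²)`, and at
least `μ tanh 1 log (s μ)` once `s μ ≥ 1`, so it maps `(0, ∞)` bijectively onto itself and
`G s = ξm / λ` has a unique root; `Tc` decreases as `G` increases. Finally
`s G s = log cosh (s ξm) + k (s μ)` with `k x = x Ψ x - log cosh x`, whose derivative is `Ψ x > 0`;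
so `G` also increases with `μ`, and a larger `μ` (or a smaller `ξm / λ`) forces a larger `Tc`.
-/

noncomputable def critEq (ξm lam μ Tc : ℝ) : Prop :=
  ξm / lam = 2 * Tc * Real.log (Real.cosh (ξm / (2 * Tc)) / Real.cosh (μ / (2 * Tc)))
    + μ * ∫ ξ in (0 : ℝ)..μ, Real.tanh (ξ / (2 * Tc)) / ξ

open Real Set intervalIntegral

namespace Real

theorem hasDerivAt_tanh (x : ℝ) : HasDerivAt tanh (cosh x ^ 2)⁻¹ x := by
  have h := (hasDerivAt_sinh x).div (hasDerivAt_cosh x) (cosh_pos x).ne'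
  rw [← sq, ← sq, cosh_sq_sub_sinh_sq, ← inv_eq_one_div] at h
  rwa [show sinh / cosh = tanh from funext fun y => (tanh_eq_sinh_div_cosh y).symm] at h

@[fun_prop]
theorem continuous_tanh : Continuous tanh :=
  continuous_iff_continuousAt.2 fun x => (hasDerivAt_tanh x).continuousAt

theorem tanh_strictMono : StrictMono tanh :=
  strictMono_of_deriv_pos fun x => by rw [(hasDerivAt_tanh x).deriv]; positivity

theorem tanh_pos {x : ℝ} (hx : 0 < x) : 0 < tanh x := by
  simpa using tanh_strictMono hx

theorem monotone_self_sub_tanh : Monotone fun x => x - tanh x := by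
  have hderiv x : HasDerivAt (fun x => x - tanh x) (1 - (cosh x ^ 2)⁻¹) x :=
    (hasDerivAt_id x).sub (hasDerivAt_tanh x)
  refine monotone_of_deriv_nonneg (fun x => (hderiv x).differentiableAt) fun x => ?_
  rw [(hderiv x).deriv, sub_nonneg]
  exact inv_le_one_of_one_le₀ (one_le_pow₀ (one_le_cosh x))

theorem tanh_div_self_nonneg (x : ℝ) : 0 ≤ tanh x / x := by
  rcases le_total 0 x with hx | hx
  · exact div_nonneg (by simpa using tanh_strictMono.monotone hx) hx
  · exact div_nonneg_of_nonpos (by simpa using tanh_strictMono.monotone hx) hx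

theorem tanh_div_self_le_one (x : ℝ) : tanh x / x ≤ 1 := by
  rcases lt_trichotomy x 0 with hx | rfl | hx
  · rw [div_le_one_of_neg hx]
    simpa using monotone_self_sub_tanh hx.le
  · simp
  · rw [div_le_one hx]
    simpa using monotone_self_sub_tanh hx.le

theorem intervalIntegrable_tanh_div_self (a b : ℝ) :
    IntervalIntegrable (fun x => tanh x / x) MeasureTheory.volume a b := by
  refine (intervalIntegrable_const (c := (1 : ℝ))).mono_fun
    (continuous_tanh.measurable.div measurable_id).aestronglyMeasurable
    (Filter.Eventually.of_forall fun x => ?_)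
  dsimp only
  rw [norm_of_nonneg (tanh_div_self_nonneg x), norm_one]
  exact tanh_div_self_le_one x

theorem hasDerivAt_log_cosh (x : ℝ) : HasDerivAt (fun y => log (cosh y)) (tanh x) x := by
  simpa only [← tanh_eq_sinh_div_cosh] using (hasDerivAt_cosh x).log (cosh_pos x).ne'

theorem continuous_log_cosh : Continuous fun x => log (cosh x) :=
  continuous_cosh.log fun x => (cosh_pos x).ne'

theorem log_cosh_le_sq_div_two (x : ℝ) : log (cosh x) ≤ x ^ 2 / 2 := by
  simpa using log_le_log (cosh_pos x) (cosh_le_exp_half_sq x)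

theorem mul_integral_tanh_mul (s a b : ℝ) :
    s * ∫ t in a..b, tanh (s * t) = log (cosh (s * b)) - log (cosh (s * a)) := by
  rw [← integral_const_mul]
  refine integral_eq_sub_of_hasDerivAt (f := fun t => log (cosh (s * t))) (fun t _ => ?_)
    (Continuous.intervalIntegrable (by fun_prop) _ _)
  rw [mul_comm]
  exact (hasDerivAt_log_cosh (s * t)).comp t
    ((hasDerivAt_id t).const_mul s |>.congr_deriv (mul_one s))

end Real

noncomputable def tanhDivIntegral (x : ℝ) : ℝ := ∫ t in (0 : ℝ)..x, tanh t / t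

@[fun_prop]
theorem continuous_tanhDivIntegral : Continuous tanhDivIntegral :=
  continuous_primitive intervalIntegrable_tanh_div_self 0

theorem hasDerivAt_tanhDivIntegral {x : ℝ} (hx : x ≠ 0) :
    HasDerivAt tanhDivIntegral (tanh x / x) x :=
  integral_hasDerivAt_right (intervalIntegrable_tanh_div_self 0 x)
    (continuous_tanh.measurable.div measurable_id).stronglyMeasurable.stronglyMeasurableAtFilter
    (continuous_tanh.continuousAt.div continuousAt_id hx)

theorem tanhDivIntegral_strictMonoOn : StrictMonoOn tanhDivIntegral (Ici 0) := by
  refine strictMonoOn_of_deriv_pos (convex_Ici 0) continuous_tanhDivIntegral.continuousOn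
    fun x hx => ?_
  rw [interior_Ici, mem_Ioi] at hx
  rw [(hasDerivAt_tanhDivIntegral hx.ne').deriv]
  exact div_pos (tanh_pos hx) hx

theorem tanhDivIntegral_zero : tanhDivIntegral 0 = 0 := integral_same

theorem tanhDivIntegral_pos {x : ℝ} (hx : 0 < x) : 0 < tanhDivIntegral x :=
  tanhDivIntegral_zero ▸ tanhDivIntegral_strictMonoOn self_mem_Ici hx.le hx

theorem tanhDivIntegral_nonneg {x : ℝ} (hx : 0 ≤ x) : 0 ≤ tanhDivIntegral x :=
  tanhDivIntegral_zero ▸ tanhDivIntegral_strictMonoOn.monotoneOn self_mem_Ici hx hx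

theorem tanhDivIntegral_le_self {x : ℝ} (hx : 0 ≤ x) : tanhDivIntegral x ≤ x := by
  simpa [tanhDivIntegral] using integral_mono_on hx (intervalIntegrable_tanh_div_self 0 x)
    intervalIntegrable_const fun t _ => tanh_div_self_le_one t

theorem tanh_one_mul_log_le_tanhDivIntegral {x : ℝ} (hx : 1 ≤ x) :
    tanh 1 * log x ≤ tanhDivIntegral x := by
  have hsplit : tanhDivIntegral x = tanhDivIntegral 1 + ∫ t in (1 : ℝ)..x, tanh t / t :=
    (integral_add_adjacent_intervals (intervalIntegrable_tanh_div_self 0 1)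
      (intervalIntegrable_tanh_div_self 1 x)).symm
  have hlog : ∫ t in (1 : ℝ)..x, tanh 1 * t⁻¹ = tanh 1 * log x := by
    rw [integral_const_mul, integral_inv_of_pos one_pos (by linarith), div_one]
  have hcmp : ∫ t in (1 : ℝ)..x, tanh 1 * t⁻¹ ≤ ∫ t in (1 : ℝ)..x, tanh t / t := by
    refine integral_mono_on hx ?_ (intervalIntegrable_tanh_div_self 1 x) fun t ht => ?_
    · refine (continuousOn_const.mul (continuousOn_inv₀.mono fun t ht => ?_)).intervalIntegrable
      rw [uIcc_of_le hx] at ht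
      exact (zero_lt_one.trans_le ht.1).ne'
    · rw [← div_eq_mul_inv]
      exact div_le_div_of_nonneg_right (tanh_strictMono.monotone ht.1) (by linarith [ht.1])
  linarith [tanhDivIntegral_nonneg zero_le_one]

theorem integral_tanh_mul_div {s : ℝ} (hs : s ≠ 0) (x : ℝ) :
    ∫ t in (0 : ℝ)..x, tanh (s * t) / t = tanhDivIntegral (s * x) := by
  have hpt (t : ℝ) : tanh (s * t) / t = s * (tanh (s * t) / (s * t)) := by
    rcases eq_or_ne t 0 with rfl | ht
    · simp
    · field_simp
  simp_rw [hpt, integral_const_mul, integral_comp_mul_left (fun t => tanh t / t) hs, mul_zero,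
    smul_eq_mul, mul_inv_cancel_left₀ hs]
  rfl

theorem hasDerivAt_mul_tanhDivIntegral_sub_log_cosh {x : ℝ} (hx : x ≠ 0) :
    HasDerivAt (fun y => y * tanhDivIntegral y - log (cosh y)) (tanhDivIntegral x) x := by
  refine ((hasDerivAt_id x).mul (hasDerivAt_tanhDivIntegral hx)).sub (hasDerivAt_log_cosh x)
    |>.congr_deriv ?_
  rw [id, mul_div_cancel₀ _ hx]
  ring

theorem mul_tanhDivIntegral_sub_log_cosh_strictMonoOn :
    StrictMonoOn (fun x => x * tanhDivIntegral x - log (cosh x)) (Ici 0) := by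
  refine strictMonoOn_of_deriv_pos (convex_Ici 0)
    (continuous_id.mul continuous_tanhDivIntegral |>.sub continuous_log_cosh).continuousOn
    fun x hx => ?_
  rw [interior_Ici, mem_Ioi] at hx
  rw [(hasDerivAt_mul_tanhDivIntegral_sub_log_cosh hx.ne').deriv]
  exact tanhDivIntegral_pos hx

-- The right-hand side of `critEq`, as a function of `s = 1 / (2 * Tc)`.
noncomputable def critRHS (ξm μ s : ℝ) : ℝ :=
  (log (cosh (s * ξm)) - log (cosh (s * μ))) / s + μ * tanhDivIntegral (s * μ)

theorem critEq_iff {ξm lam μ T : ℝ} (hT : 0 < T) :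
    critEq ξm lam μ T ↔ critRHS ξm μ (2 * T)⁻¹ = ξm / lam := by
  have hs : (2 * T)⁻¹ ≠ 0 := by positivity
  have hdiv (x : ℝ) : x / (2 * T) = (2 * T)⁻¹ * x := div_eq_inv_mul x _
  rw [critEq, eq_comm, critRHS, hdiv, hdiv, log_div (cosh_pos _).ne' (cosh_pos _).ne']
  simp_rw [hdiv, integral_tanh_mul_div hs, div_eq_inv_mul _ (2 * T)⁻¹, inv_inv]

section critRHS

variable {ξm μ s : ℝ}

theorem critRHS_eq_integral (hs : s ≠ 0) :
    critRHS ξm μ s = (∫ t in μ..ξm, tanh (s * t)) + μ * tanhDivIntegral (s * μ) := by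
  rw [critRHS, ← mul_integral_tanh_mul, mul_div_cancel_left₀ _ hs]

theorem critRHS_eq_log_cosh_add (hs : s ≠ 0) :
    critRHS ξm μ s =
      (log (cosh (s * ξm)) + (s * μ * tanhDivIntegral (s * μ) - log (cosh (s * μ)))) / s := by
  rw [critRHS]
  field_simp
  ring

theorem continuousOn_critRHS : ContinuousOn (critRHS ξm μ) (Ioi 0) := by
  refine ContinuousOn.add ?_ (by fun_prop)
  exact ((continuous_log_cosh.comp (continuous_mul_const ξm)).sub
    (continuous_log_cosh.comp (continuous_mul_const μ))).continuousOn.div continuousOn_id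
    fun s hs => ne_of_gt hs

theorem critRHS_strictMonoOn (hμ : 0 ≤ μ) (hμξ : μ < ξm) :
    StrictMonoOn (critRHS ξm μ) (Ioi 0) := by
  intro s₁ hs₁ s₂ hs₂ hs
  rw [mem_Ioi] at hs₁ hs₂
  rw [critRHS_eq_integral hs₁.ne', critRHS_eq_integral hs₂.ne']
  have htanh : ∫ t in μ..ξm, tanh (s₁ * t) < ∫ t in μ..ξm, tanh (s₂ * t) := by
    refine integral_lt_integral_of_continuousOn_of_le_of_exists_lt hμξ (by fun_prop) (by fun_prop)
      (fun t ht => tanh_strictMono.monotone ?_) ⟨ξm, right_mem_Icc.2 hμξ.le, tanh_strictMono ?_⟩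
    · exact mul_le_mul_of_nonneg_right hs.le (hμ.trans ht.1.le)
    · exact mul_lt_mul_of_pos_right hs (hμ.trans_lt hμξ)
  have hΨ : tanhDivIntegral (s₁ * μ) ≤ tanhDivIntegral (s₂ * μ) :=
    tanhDivIntegral_strictMonoOn.monotoneOn (mem_Ici.2 (by positivity))
      (mem_Ici.2 (by positivity)) (mul_le_mul_of_nonneg_right hs.le hμ)
  linarith [mul_le_mul_of_nonneg_left hΨ hμ]

theorem critRHS_strictMonoOn_doping (hs : 0 < s) : StrictMonoOn (critRHS ξm · s) (Ici 0) := by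
  intro μ₁ hμ₁ μ₂ hμ₂ hμ
  have hk := mul_tanhDivIntegral_sub_log_cosh_strictMonoOn (mul_nonneg hs.le hμ₁)
    (mul_nonneg hs.le hμ₂) (mul_lt_mul_of_pos_left hμ hs)
  simp only [critRHS_eq_log_cosh_add hs.ne']
  exact div_lt_div_of_pos_right ((add_lt_add_iff_left _).2 hk) hs

theorem critRHS_le (hμ : 0 ≤ μ) (hs : 0 < s) : critRHS ξm μ s ≤ s * (ξm ^ 2 / 2 + μ ^ 2) := by
  have hlog : (log (cosh (s * ξm)) - log (cosh (s * μ))) / s ≤ s * (ξm ^ 2 / 2) := by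
    rw [div_le_iff₀ hs]
    nlinarith [log_cosh_le_sq_div_two (s * ξm), log_nonneg (one_le_cosh (s * μ))]
  have hΨ : μ * tanhDivIntegral (s * μ) ≤ μ * (s * μ) :=
    mul_le_mul_of_nonneg_left (tanhDivIntegral_le_self (by positivity)) hμ
  rw [critRHS]
  linarith

theorem le_critRHS (hμ : 0 ≤ μ) (hμξ : μ ≤ ξm) (hs : 0 < s) (hsμ : 1 ≤ s * μ) :
    μ * (tanh 1 * log (s * μ)) ≤ critRHS ξm μ s := by
  have hlog : 0 ≤ (log (cosh (s * ξm)) - log (cosh (s * μ))) / s := by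
    refine div_nonneg (sub_nonneg.2 (log_le_log (cosh_pos _) (cosh_le_cosh.2 ?_))) hs.le
    rw [abs_of_nonneg (by positivity), abs_of_nonneg (by nlinarith)]
    exact mul_le_mul_of_nonneg_left hμξ hs.le
  have hΨ := mul_le_mul_of_nonneg_left (tanh_one_mul_log_le_tanhDivIntegral hsμ) hμ
  rw [critRHS]
  linarith

theorem surjOn_critRHS (hμ : 0 < μ) (hμξ : μ ≤ ξm) : SurjOn (critRHS ξm μ) (Ioi 0) (Ioi 0) := by
  intro c hc
  rw [mem_Ioi] at hc
  have htanh : 0 < tanh 1 := tanh_pos one_pos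
  set s₁ := c / (ξm ^ 2 / 2 + μ ^ 2)
  set s₂ := exp (c / (μ * tanh 1)) / μ
  have hs₁ : 0 < s₁ := by positivity
  have hs₂μ : s₂ * μ = exp (c / (μ * tanh 1)) := div_mul_cancel₀ _ hμ.ne'
  have hlow : critRHS ξm μ s₁ ≤ c :=
    (critRHS_le hμ.le hs₁).trans_eq (div_mul_cancel₀ _ (by positivity))
  have hhigh : c ≤ critRHS ξm μ s₂ := by
    refine le_of_eq_of_le ?_
      (le_critRHS hμ.le hμξ (by positivity) (hs₂μ ▸ one_le_exp (by positivity)))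
    rw [hs₂μ, log_exp]
    field_simp
  exact isPreconnected_Ioi.intermediate_value hs₁ (mem_Ioi.2 (by positivity))
    continuousOn_critRHS ⟨hlow, hhigh⟩

end critRHS

theorem lt_of_critRHS_inv_lt {ξm μ T₁ T₂ : ℝ} (hμ : 0 ≤ μ) (hμξ : μ < ξm) (hT₁ : 0 < T₁)
    (hT₂ : 0 < T₂) (h : critRHS ξm μ (2 * T₂)⁻¹ < critRHS ξm μ (2 * T₁)⁻¹) : T₁ < T₂ := by
  have hinv := (critRHS_strictMonoOn hμ hμξ).lt_iff_lt (mem_Ioi.2 (by positivity))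
    (mem_Ioi.2 (by positivity)) |>.1 h
  linarith [(inv_lt_inv₀ (by positivity) (by positivity)).1 hinv]

theorem critical_temperature_exists_unique_and_monotone_general (ξm : ℝ) :
    (∀ lam μ : ℝ, 0 < lam → 0 < μ → μ < ξm → ∃! Tc : ℝ, 0 < Tc ∧ critEq ξm lam μ Tc) ∧
    (∀ lam μ₁ μ₂ T₁ T₂ : ℝ, 0 < lam → 0 < μ₁ → μ₁ < μ₂ → μ₂ < ξm →
      0 < T₁ → 0 < T₂ → critEq ξm lam μ₁ T₁ → critEq ξm lam μ₂ T₂ → T₁ < T₂) ∧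
    (∀ lam₁ lam₂ μ T₁ T₂ : ℝ, 0 < lam₁ → lam₁ < lam₂ → 0 < μ → μ < ξm →
      0 < T₁ → 0 < T₂ → critEq ξm lam₁ μ T₁ → critEq ξm lam₂ μ T₂ → T₁ < T₂) := by
  refine ⟨fun lam μ hlam hμ hμξ => ?_,
    fun lam μ₁ μ₂ T₁ T₂ hlam hμ₁ hμ₁₂ hμ₂ξ hT₁ hT₂ h₁ h₂ => ?_,
    fun lam₁ lam₂ μ T₁ T₂ hlam₁ hlam₁₂ hμ hμξ hT₁ hT₂ h₁ h₂ => ?_⟩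
  · obtain ⟨s, hs, hsol⟩ := surjOn_critRHS hμ hμξ.le (div_pos (hμ.trans hμξ) hlam)
    rw [mem_Ioi] at hs
    have hTs : (2 * (2 * s)⁻¹)⁻¹ = s := by field_simp
    refine ⟨(2 * s)⁻¹, ⟨by positivity, (critEq_iff (by positivity)).2 (by rw [hTs, hsol])⟩, ?_⟩
    rintro T ⟨hT, hcrit⟩
    have hsT : (2 * T)⁻¹ = s := (critRHS_strictMonoOn hμ.le hμξ).injOn
      (mem_Ioi.2 (by positivity)) (mem_Ioi.2 hs) (((critEq_iff hT).1 hcrit).trans hsol.symm)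
    rw [← hsT]
    field_simp
  · rw [critEq_iff hT₁] at h₁
    rw [critEq_iff hT₂] at h₂
    refine lt_of_critRHS_inv_lt hμ₁.le (hμ₁₂.trans hμ₂ξ) hT₁ hT₂ ?_
    calc critRHS ξm μ₁ (2 * T₂)⁻¹ < critRHS ξm μ₂ (2 * T₂)⁻¹ :=
          critRHS_strictMonoOn_doping (by positivity) hμ₁.le (hμ₁.trans hμ₁₂).le hμ₁₂
      _ = critRHS ξm μ₁ (2 * T₁)⁻¹ := h₂.trans h₁.symm
  · rw [critEq_iff hT₁] at h₁
    rw [critEq_iff hT₂] at h₂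
    refine lt_of_critRHS_inv_lt hμ.le hμξ hT₁ hT₂ ?_
    rw [h₁, h₂]
    exact div_lt_div_of_pos_left (hμ.trans hμξ) hlam₁ hlam₁₂

theorem critical_temperature_exists_unique_and_monotone (ξm : ℝ) (hξ : 0 < ξm) :
    (∀ lam μ : ℝ, 0 < lam → 0 < μ → μ < ξm → ∃! Tc : ℝ, 0 < Tc ∧ critEq ξm lam μ Tc) ∧
    (∀ lam μ₁ μ₂ T₁ T₂ : ℝ, 0 < lam → 0 < μ₁ → μ₁ < μ₂ → μ₂ < ξm →
      0 < T₁ → 0 < T₂ → critEq ξm lam μ₁ T₁ → critEq ξm lam μ₂ T₂ → T₁ < T₂) ∧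
    (∀ lam₁ lam₂ μ T₁ T₂ : ℝ, 0 < lam₁ → lam₁ < lam₂ → 0 < μ → μ < ξm →
      0 < T₁ → 0 < T₂ → critEq ξm lam₁ μ T₁ → critEq ξm lam₂ μ T₂ → T₁ < T₂) :=
  critical_temperature_exists_unique_and_monotone_general ξm
end
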